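/- Define for k≥4 the functions y_k on [0,1] by: y_k(t)=0 for 0≤t≤1/2−1/k; y_k(t)=k(t−1/2+1/k) for 1/2−1/k≤t≤1/2; y_k(t)=−2k(t−1/2−1/(2k)) for 1/2≤t≤1/2+1/k; y_k(t)=−1 for 1/2+1/k≤t≤1. Let f∈C([0,1]), h continuous bounded with primitive H, and g_0 continuous on ℝ with finite limits g_0(±∞) at ±∞; set g(u)=(1+|u|)g_0(u) and u_k=ẏ_k. Then lim_{k→∞} ∫_0^1 f(t) g(u_k(t)) h(y_k(t)) dt = ∫_0^{1/2} f(t)g(0)h(0)dt + ∫_{1/2}^1 f(t)g(0)h(−1)dt + f(1/2)g_0(+∞)(H(1)−H(0)) + f(1/2)g_0(−∞)(H(1)−H(−1)). -/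

import Mathlib

open MeasureTheory Filter Set

/-- The zig-zag trajectory: spikes up to `1`, then jumps down to `-1`. -/
noncomputable def yZig (k : ℕ) (t : ℝ) : ℝ :=
  if t ≤ 1 / 2 - 1 / k then 0
  else if t ≤ 1 / 2 then (k : ℝ) * (t - 1 / 2 + 1 / k)
  else if t ≤ 1 / 2 + 1 / k then -2 * k * (t - 1 / 2 - 1 / (2 * k))
  else -1

/-- Its a.e. derivative: `0, k, -2k, 0` on the four subintervals. -/
noncomputable def uZig (k : ℕ) (t : ℝ) : ℝ :=
  if t ≤ 1 / 2 - 1 / k then 0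
  else if t ≤ 1 / 2 then (k : ℝ)
  else if t ≤ 1 / 2 + 1 / k then -2 * k
  else 0

open scoped Topology

/-!
Where `u_k = 0` the integrand already agrees with the limit one, up to intervals of length `1/k`.
On each ramp `y_k` is affine with slope `s = u_k → ±∞`, so substituting `x = y_k(t)` gives
`∫ g(u_k) h(y_k) = (g(s) / s) (H(q) - H(p))` with `g(s) / s = (1 + |s|) g₀(s) / s → ±g₀(±∞)`.
The ramps shrink to `t = 1/2` while `∫ |g(u_k) h(y_k)|` stays bounded, so `f(t)` may be
replaced by `f(1/2)` there.
-/

theorem tendsto_integral_mul_of_concentrating {ι : Type*} {l : Filter ι} {f : ℝ → ℝ}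
    {x₀ L : ℝ} {U : Set ℝ} (hU : U ∈ 𝓝 x₀) (hf : ContinuousOn f U) {a b : ι → ℝ}
    {G : ι → ℝ → ℝ} (ha : Tendsto a l (𝓝 x₀)) (hb : Tendsto b l (𝓝 x₀))
    (hab : ∀ᶠ i in l, a i ≤ b i) (hG : ∀ i, Continuous (G i))
    (hbdd : IsBoundedUnder (· ≤ ·) l fun i => ∫ t in a i..b i, |G i t|)
    (hL : Tendsto (fun i => ∫ t in a i..b i, G i t) l (𝓝 L)) :
    Tendsto (fun i => ∫ t in a i..b i, f t * G i t) l (𝓝 (f x₀ * L)) := by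
  obtain ⟨C, hC⟩ := hbdd
  obtain ⟨r, hr, hrU⟩ := Metric.mem_nhds_iff.1 hU
  have hnear : ∀ δ > 0, ∀ᶠ i in l, Icc (a i) (b i) ⊆ Metric.ball x₀ δ := fun δ hδ => by
    filter_upwards [ha (Metric.ball_mem_nhds x₀ hδ), hb (Metric.ball_mem_nhds x₀ hδ)]
      with i hai hbi
    rw [Real.ball_eq_Ioo] at hai hbi ⊢
    exact Icc_subset_Ioo hai.1 hbi.2
  have hsplit : ∀ᶠ i in l, ∫ t in a i..b i, f t * G i t =
      (∫ t in a i..b i, (f t - f x₀) * G i t) + f x₀ * ∫ t in a i..b i, G i t := by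
    filter_upwards [hnear r hr, hab] with i hi hab
    have hfi : ContinuousOn f (uIcc (a i) (b i)) := hf.mono <| by
      rw [uIcc_of_le hab]; exact hi.trans hrU
    rw [← intervalIntegral.integral_const_mul, ← intervalIntegral.integral_add]
    · simp only [← add_mul, sub_add_cancel]
    · exact ((hfi.sub continuousOn_const).mul (hG i).continuousOn).intervalIntegrable
    · exact ((hG i).const_mul _).intervalIntegrable _ _
  have herr : Tendsto (fun i => ∫ t in a i..b i, (f t - f x₀) * G i t) l (𝓝 0) := by
    rw [Metric.tendsto_nhds]
    intro ε hε
    set ε' := ε / (|C| + 1)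
    obtain ⟨δ, hδ, hfδ⟩ := Metric.continuousAt_iff.1 (hf.continuousAt hU) ε' (by positivity)
    filter_upwards [hnear (min δ r) (lt_min hδ hr), hab, eventually_map.1 hC] with i hi hab hCi
    have hbound : ∀ t ∈ Ioc (a i) (b i), ‖(f t - f x₀) * G i t‖ ≤ ε' * |G i t| := fun t ht => by
      rw [norm_mul, Real.norm_eq_abs (G i t)]
      gcongr
      exact (hfδ ((hi (Ioc_subset_Icc_self ht)).trans_le (min_le_left δ r))).le
    calc dist (∫ t in a i..b i, (f t - f x₀) * G i t) 0
        ≤ ∫ t in a i..b i, ε' * |G i t| :=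
          (dist_zero_right _).trans_le <| intervalIntegral.norm_integral_le_of_norm_le hab
            (ae_of_all _ hbound) (((hG i).abs.const_mul _).intervalIntegrable _ _)
      _ = ε' * ∫ t in a i..b i, |G i t| := intervalIntegral.integral_const_mul _ _
      _ ≤ ε' * |C| := by gcongr; exact hCi.trans (le_abs_self C)
      _ < ε := by
          rw [div_mul_eq_mul_div, div_lt_iff₀ (by positivity)]
          nlinarith [abs_nonneg C]
  simpa using (herr.add (hL.const_mul (f x₀))).congr' (hsplit.mono fun i hi => hi.symm)

theorem integral_comp_affine (F : ℝ → ℝ) {s : ℝ} (hs : s ≠ 0) (a b d : ℝ) :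
    ∫ t in a..b, F (s * (t - d)) = s⁻¹ * ∫ x in s * (a - d)..s * (b - d), F x := by
  simp only [mul_sub, intervalIntegral.integral_comp_mul_sub F hs, smul_eq_mul]

theorem integral_comp_affine_of_hasDerivAt {h H : ℝ → ℝ} (hh : Continuous h)
    (hH : ∀ x, HasDerivAt H (h x) x) {s : ℝ} (hs : s ≠ 0) (a b d : ℝ) :
    ∫ t in a..b, h (s * (t - d)) = s⁻¹ * (H (s * (b - d)) - H (s * (a - d))) := by
  rw [integral_comp_affine h hs, intervalIntegral.integral_eq_sub_of_hasDerivAt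
    (fun x _ => hH x) (hh.intervalIntegrable _ _)]

theorem tendsto_integral_mul_comp_ramp {ι : Type*} {l : Filter ι} {f h H : ℝ → ℝ}
    {x₀ p q c : ℝ} {U : Set ℝ} (hU : U ∈ 𝓝 x₀) (hf : ContinuousOn f U) (hh : Continuous h)
    (hH : ∀ x, HasDerivAt H (h x) x) {a b s d w : ι → ℝ} (ha : Tendsto a l (𝓝 x₀))
    (hb : Tendsto b l (𝓝 x₀)) (hab : ∀ᶠ i in l, a i ≤ b i) (hs : ∀ᶠ i in l, s i ≠ 0)
    (hp : ∀ᶠ i in l, s i * (a i - d i) = p) (hq : ∀ᶠ i in l, s i * (b i - d i) = q)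
    (hw : Tendsto (fun i => w i / s i) l (𝓝 c)) :
    Tendsto (fun i => ∫ t in a i..b i, f t * w i * h (s i * (t - d i))) l
      (𝓝 (f x₀ * c * (H q - H p))) := by
  have hint : ∀ᶠ i in l, ∫ t in a i..b i, w i * h (s i * (t - d i)) = w i / s i * (H q - H p) := by
    filter_upwards [hs, hp, hq] with i hs hp hq
    rw [intervalIntegral.integral_const_mul, integral_comp_affine_of_hasDerivAt hh hH hs, hp, hq,
      div_eq_mul_inv, mul_assoc]
  have habs : ∀ᶠ i in l, ∫ t in a i..b i, |w i * h (s i * (t - d i))| ≤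
      |w i / s i| * |(∫ x in p..q, |h x|)| := by
    filter_upwards [hs, hp, hq] with i hs hp hq
    calc ∫ t in a i..b i, |w i * h (s i * (t - d i))|
        = |w i| * ((s i)⁻¹ * ∫ x in p..q, |h x|) := by
          simp only [abs_mul, intervalIntegral.integral_const_mul,
            integral_comp_affine (fun x => |h x|) hs, hp, hq]
      _ ≤ |w i| * |(s i)⁻¹ * (∫ x in p..q, |h x|)| := by gcongr; exact le_abs_self _
      _ = |w i / s i| * |(∫ x in p..q, |h x|)| := by rw [abs_mul, abs_div, abs_inv]; ring
  have hlim := tendsto_integral_mul_of_concentrating hU hf ha hb hab (fun i => by fun_prop)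
    ((hw.abs.mul_const _).isBoundedUnder_le.mono_le habs)
    ((hw.mul_const (H q - H p)).congr' (hint.mono fun i hi => hi.symm))
  simpa only [mul_assoc] using hlim

theorem tendsto_one_add_abs_mul_div_atTop {g₀ : ℝ → ℝ} {γ : ℝ} (hg : Tendsto g₀ atTop (𝓝 γ)) :
    Tendsto (fun s => (1 + |s|) * g₀ s / s) atTop (𝓝 γ) := by
  have hlim : Tendsto (fun s : ℝ => (s⁻¹ + 1) * g₀ s) atTop (𝓝 ((0 + 1) * γ)) :=
    (tendsto_inv_atTop_zero.add_const 1).mul hg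
  rw [zero_add, one_mul] at hlim
  refine hlim.congr' ?_
  filter_upwards [eventually_gt_atTop 0] with s hs
  rw [abs_of_pos hs]
  field_simp

theorem tendsto_one_add_abs_mul_div_atBot {g₀ : ℝ → ℝ} {γ : ℝ} (hg : Tendsto g₀ atBot (𝓝 γ)) :
    Tendsto (fun s => (1 + |s|) * g₀ s / s) atBot (𝓝 (-γ)) := by
  have hlim : Tendsto (fun s : ℝ => (s⁻¹ - 1) * g₀ s) atBot (𝓝 ((0 - 1) * γ)) :=
    (tendsto_inv_atBot_zero.sub_const 1).mul hg
  rw [zero_sub, neg_one_mul] at hlim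
  refine hlim.congr' ?_
  filter_upwards [eventually_lt_atBot 0] with s hs
  rw [abs_of_neg hs]
  field_simp [hs.ne]
  ring

theorem tendsto_intervalIntegral_of_continuousOn {ι : Type*} {l : Filter ι} {φ : ℝ → ℝ}
    {p q x y : ℝ} {u v : ι → ℝ} (hφ : ContinuousOn φ (Icc p q)) (hx : x ∈ Icc p q)
    (hy : y ∈ Icc p q) (hu : Tendsto u l (𝓝 x)) (hv : Tendsto v l (𝓝 y))
    (hu' : ∀ᶠ i in l, u i ∈ Icc p q) (hv' : ∀ᶠ i in l, v i ∈ Icc p q) :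
    Tendsto (fun i => ∫ t in u i..v i, φ t) l (𝓝 (∫ t in x..y, φ t)) := by
  have hpq : p ≤ q := hx.1.trans hx.2
  have hint : ∀ z ∈ Icc p q, IntervalIntegrable φ volume p z := fun z hz =>
    (hφ.mono (uIcc_subset_Icc (left_mem_Icc.2 hpq) hz)).intervalIntegrable
  have hcont : ContinuousOn (fun z => ∫ t in p..z, φ t) (Icc p q) := by
    simpa only [uIcc_of_le hpq] using
      intervalIntegral.continuousOn_primitive_interval' (hint q (right_mem_Icc.2 hpq)) left_mem_uIcc
  have hprim : ∀ z ∈ Icc p q, ∀ c : ι → ℝ, Tendsto c l (𝓝 z) → (∀ᶠ i in l, c i ∈ Icc p q) →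
      Tendsto (fun i => ∫ t in p..c i, φ t) l (𝓝 (∫ t in p..z, φ t)) := fun z hz c hc hc' =>
    (hcont z hz).tendsto.comp (tendsto_nhdsWithin_iff.2 ⟨hc, hc'⟩)
  have hsub := (hprim y hy v hv hv').sub (hprim x hx u hu hu')
  rw [intervalIntegral.integral_interval_sub_left (hint y hy) (hint x hx)] at hsub
  refine hsub.congr' ?_
  filter_upwards [hu', hv'] with i hui hvi
  exact intervalIntegral.integral_interval_sub_left (hint _ hvi) (hint _ hui)

theorem uZig_yZig_of_le {k : ℕ} {t : ℝ} (ht : t ≤ 1 / 2 - 1 / k) :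
    uZig k t = 0 ∧ yZig k t = 0 := by
  simp only [uZig, yZig, if_pos ht, and_self]

theorem uZig_yZig_of_mem_rise {k : ℕ} {t : ℝ} (ht : t ∈ Ioc (1 / 2 - 1 / (k : ℝ)) (1 / 2)) :
    uZig k t = k ∧ yZig k t = k * (t - (1 / 2 - 1 / k)) := by
  simp only [uZig, yZig, if_neg ht.1.not_ge, if_pos ht.2, true_and]
  ring

theorem uZig_yZig_of_mem_fall {k : ℕ} {t : ℝ} (ht : t ∈ Ioc (1 / 2) (1 / 2 + 1 / (k : ℝ))) :
    uZig k t = -2 * k ∧ yZig k t = -2 * k * (t - (1 / 2 + 1 / (2 * k))) := by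
  have hk : (0 : ℝ) ≤ 1 / k := by positivity
  have ht' : ¬ t ≤ 1 / 2 - 1 / k := by linarith [ht.1]
  simp only [uZig, yZig, if_neg ht', if_neg ht.1.not_ge, if_pos ht.2, true_and]
  ring

theorem uZig_yZig_of_lt {k : ℕ} {t : ℝ} (ht : 1 / 2 + 1 / k < t) :
    uZig k t = 0 ∧ yZig k t = -1 := by
  have hk : (0 : ℝ) ≤ 1 / k := by positivity
  have ht₁ : ¬ t ≤ 1 / 2 - 1 / k := by linarith
  have ht₂ : ¬ t ≤ 1 / 2 := by linarith
  simp only [uZig, yZig, if_neg ht₁, if_neg ht₂, if_neg ht.not_ge, and_self]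

theorem intervalIntegrable_and_integral_eq_of_eqOn_Ioc {F G : ℝ → ℝ} {a b : ℝ} (hab : a ≤ b)
    (hG : ContinuousOn G (Icc a b)) (hFG : EqOn F G (Ioc a b)) :
    IntervalIntegrable F volume a b ∧ ∫ t in a..b, F t = ∫ t in a..b, G t := by
  rw [← uIoc_of_le hab] at hFG
  rw [← uIcc_of_le hab] at hG
  exact ⟨hG.intervalIntegrable.congr hFG.symm, intervalIntegral.integral_congr_ae (ae_of_all _ hFG)⟩

theorem integral_zigzag_eq {f g₀ h : ℝ → ℝ} (hf : ContinuousOn f (Icc 0 1)) (hh : Continuous h)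
    {k : ℕ} (hk : 2 ≤ k) :
    ∫ t in (0:ℝ)..1, f t * ((1 + |uZig k t|) * g₀ (uZig k t)) * h (yZig k t) =
      (∫ t in (0:ℝ)..(1 / 2 - 1 / k), f t * ((1 + |(0:ℝ)|) * g₀ 0) * h 0) +
      (∫ t in (1 / 2 - 1 / k : ℝ)..(1 / 2), f t * ((1 + |(k:ℝ)|) * g₀ k) *
        h (k * (t - (1 / 2 - 1 / k)))) +
      (∫ t in (1 / 2 : ℝ)..(1 / 2 + 1 / k), f t * ((1 + |(-2 * k : ℝ)|) * g₀ (-2 * k)) *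
        h (-2 * k * (t - (1 / 2 + 1 / (2 * k))))) +
      (∫ t in (1 / 2 + 1 / k : ℝ)..1, f t * ((1 + |(0:ℝ)|) * g₀ 0) * h (-1)) := by
  have hk₀ : (0 : ℝ) ≤ 1 / k := by positivity
  have hk₂ : (1 : ℝ) / k ≤ 1 / 2 := by gcongr; exact_mod_cast hk
  have hfon : ∀ a b, 0 ≤ a → b ≤ 1 → ContinuousOn f (Icc a b) := fun a b ha hb =>
    hf.mono (Icc_subset_Icc ha hb)
  set Z : ℝ → ℝ := fun t => f t * ((1 + |uZig k t|) * g₀ (uZig k t)) * h (yZig k t) with hZ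
  obtain ⟨i₁, e₁⟩ : IntervalIntegrable Z volume 0 (1 / 2 - 1 / k) ∧
      ∫ t in (0:ℝ)..(1 / 2 - 1 / k), Z t =
        ∫ t in (0:ℝ)..(1 / 2 - 1 / k), f t * ((1 + |(0:ℝ)|) * g₀ 0) * h 0 :=
    intervalIntegrable_and_integral_eq_of_eqOn_Ioc (by linarith)
      (((hfon _ _ le_rfl (by linarith)).mul continuousOn_const).mul continuousOn_const)
      (fun t ht => by simp only [hZ, uZig_yZig_of_le ht.2])
  obtain ⟨i₂, e₂⟩ : IntervalIntegrable Z volume (1 / 2 - 1 / k) (1 / 2) ∧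
      ∫ t in (1 / 2 - 1 / k : ℝ)..(1 / 2), Z t =
        ∫ t in (1 / 2 - 1 / k : ℝ)..(1 / 2), f t * ((1 + |(k:ℝ)|) * g₀ k) *
          h (k * (t - (1 / 2 - 1 / k))) :=
    intervalIntegrable_and_integral_eq_of_eqOn_Ioc (by linarith)
      (((hfon _ _ (by linarith) (by norm_num)).mul continuousOn_const).mul
        (by fun_prop : Continuous fun t : ℝ => h (k * (t - (1 / 2 - 1 / k)))).continuousOn)
      (fun t ht => by simp only [hZ, uZig_yZig_of_mem_rise ht])
  obtain ⟨i₃, e₃⟩ : IntervalIntegrable Z volume (1 / 2) (1 / 2 + 1 / k) ∧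
      ∫ t in (1 / 2 : ℝ)..(1 / 2 + 1 / k), Z t =
        ∫ t in (1 / 2 : ℝ)..(1 / 2 + 1 / k), f t * ((1 + |(-2 * k : ℝ)|) * g₀ (-2 * k)) *
          h (-2 * k * (t - (1 / 2 + 1 / (2 * k)))) :=
    intervalIntegrable_and_integral_eq_of_eqOn_Ioc (by linarith)
      (((hfon _ _ (by norm_num) (by linarith)).mul continuousOn_const).mul
        (by fun_prop : Continuous fun t : ℝ =>
          h (-2 * k * (t - (1 / 2 + 1 / (2 * k))))).continuousOn)
      (fun t ht => by simp only [hZ, uZig_yZig_of_mem_fall ht])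
  obtain ⟨i₄, e₄⟩ : IntervalIntegrable Z volume (1 / 2 + 1 / k) 1 ∧
      ∫ t in (1 / 2 + 1 / k : ℝ)..1, Z t =
        ∫ t in (1 / 2 + 1 / k : ℝ)..1, f t * ((1 + |(0:ℝ)|) * g₀ 0) * h (-1) :=
    intervalIntegrable_and_integral_eq_of_eqOn_Ioc (by linarith)
      (((hfon _ _ (by linarith) le_rfl).mul continuousOn_const).mul continuousOn_const)
      (fun t ht => by simp only [hZ, uZig_yZig_of_lt ht.1])
  rw [← intervalIntegral.integral_add_adjacent_intervals ((i₁.trans i₂).trans i₃) i₄,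
    ← intervalIntegral.integral_add_adjacent_intervals (i₁.trans i₂) i₃,
    ← intervalIntegral.integral_add_adjacent_intervals i₁ i₂, e₁, e₂, e₃, e₄]

theorem tendsto_integral_zigzag_rise {f h H g₀ : ℝ → ℝ} {g₀pinf : ℝ}
    (hf : ContinuousOn f (Icc 0 1)) (hh : Continuous h) (hH : ∀ x, HasDerivAt H (h x) x)
    (hg₀p : Tendsto g₀ atTop (𝓝 g₀pinf)) :
    Tendsto (fun k : ℕ => ∫ t in (1 / 2 - 1 / k : ℝ)..(1 / 2), f t * ((1 + |(k:ℝ)|) * g₀ k) *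
        h (k * (t - (1 / 2 - 1 / k)))) atTop (𝓝 (f (1 / 2) * g₀pinf * (H 1 - H 0))) := by
  refine tendsto_integral_mul_comp_ramp (Icc_mem_nhds (by norm_num) (by norm_num)) hf hh hH
    (a := fun k : ℕ => 1 / 2 - 1 / (k : ℝ)) (b := fun _ => 1 / 2) (s := fun k => k)
    (d := fun k : ℕ => 1 / 2 - 1 / (k : ℝ)) (w := fun k : ℕ => (1 + |(k:ℝ)|) * g₀ k)
    (by simpa using tendsto_const_nhds.sub (tendsto_one_div_atTop_nhds_zero_nat (𝕜 := ℝ)))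
    tendsto_const_nhds
    (.of_forall fun k => by simp only [sub_le_self_iff]; positivity) ?_
    (.of_forall fun k => by rw [sub_self, mul_zero]) ?_
    ((tendsto_one_add_abs_mul_div_atTop hg₀p).comp tendsto_natCast_atTop_atTop)
  all_goals filter_upwards [eventually_ne_atTop 0] with k hk
  · exact_mod_cast hk
  · field_simp; ring

theorem tendsto_integral_zigzag_fall {f h H g₀ : ℝ → ℝ} {g₀minf : ℝ}
    (hf : ContinuousOn f (Icc 0 1)) (hh : Continuous h) (hH : ∀ x, HasDerivAt H (h x) x)
    (hg₀m : Tendsto g₀ atBot (𝓝 g₀minf)) :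
    Tendsto (fun k : ℕ => ∫ t in (1 / 2 : ℝ)..(1 / 2 + 1 / k), f t *
        ((1 + |(-2 * k : ℝ)|) * g₀ (-2 * k)) * h (-2 * k * (t - (1 / 2 + 1 / (2 * k)))))
      atTop (𝓝 (f (1 / 2) * g₀minf * (H 1 - H (-1)))) := by
  have hslope : Tendsto (fun k : ℕ => -2 * (k : ℝ)) atTop atBot :=
    tendsto_natCast_atTop_atTop.const_mul_atTop_of_neg (by norm_num)
  have hlim := tendsto_integral_mul_comp_ramp (Icc_mem_nhds (by norm_num) (by norm_num)) hf hh hH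
    (p := 1) (q := -1) (a := fun _ => 1 / 2) (b := fun k : ℕ => 1 / 2 + 1 / (k : ℝ))
    (s := fun k : ℕ => -2 * (k : ℝ)) (d := fun k : ℕ => 1 / 2 + 1 / (2 * (k : ℝ)))
    (w := fun k : ℕ => (1 + |(-2 * k : ℝ)|) * g₀ (-2 * k)) tendsto_const_nhds
    (by simpa using tendsto_const_nhds.add (tendsto_one_div_atTop_nhds_zero_nat (𝕜 := ℝ)))
    (.of_forall fun k => by simp only [le_add_iff_nonneg_right]; positivity) ?_ ?_ ?_
    ((tendsto_one_add_abs_mul_div_atBot hg₀m).comp hslope)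
  · convert hlim using 2
    ring
  all_goals filter_upwards [eventually_ne_atTop 0] with k hk
  · simp [hk]
  all_goals field_simp; ring

theorem anisotropic_limit_zigzag_general
    (f h H g₀ : ℝ → ℝ) (g₀pinf g₀minf : ℝ)
    (hf : ContinuousOn f (Set.Icc 0 1))
    (hh : Continuous h)
    (hH : ∀ x, HasDerivAt H (h x) x)
    (hg₀p : Tendsto g₀ atTop (nhds g₀pinf))
    (hg₀m : Tendsto g₀ atBot (nhds g₀minf)) :
    Tendsto (fun k : ℕ =>
        ∫ t in (0:ℝ)..1, f t * ((1 + |uZig k t|) * g₀ (uZig k t)) * h (yZig k t))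
      atTop
      (nhds ((∫ t in (0:ℝ)..(1/2), f t * ((1 + |(0:ℝ)|) * g₀ 0) * h 0) +
             (∫ t in (1/2:ℝ)..1, f t * ((1 + |(0:ℝ)|) * g₀ 0) * h (-1)) +
             f (1 / 2) * g₀pinf * (H 1 - H 0) +
             f (1 / 2) * g₀minf * (H 1 - H (-1)))) := by
  have hinv := tendsto_one_div_atTop_nhds_zero_nat (𝕜 := ℝ)
  have hinv_le : ∀ᶠ k : ℕ in atTop, (0 : ℝ) ≤ 1 / k ∧ (1 : ℝ) / k ≤ 1 / 2 := by
    filter_upwards [eventually_ge_atTop 2] with k hk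
    exact ⟨by positivity, by gcongr; exact_mod_cast hk⟩
  have hflat₁ := tendsto_intervalIntegral_of_continuousOn
    (φ := fun t => f t * ((1 + |(0:ℝ)|) * g₀ 0) * h 0) (x := 0) (y := 1 / 2)
    (u := fun _ : ℕ => 0) (v := fun k : ℕ => 1 / 2 - 1 / (k : ℝ))
    ((hf.mul continuousOn_const).mul continuousOn_const) (by norm_num) (by norm_num)
    tendsto_const_nhds (by simpa using tendsto_const_nhds.sub hinv)
    (.of_forall fun _ => by norm_num) (hinv_le.mono fun k hk => ⟨by linarith, by linarith⟩)
  have hflat₂ := tendsto_intervalIntegral_of_continuousOn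
    (φ := fun t => f t * ((1 + |(0:ℝ)|) * g₀ 0) * h (-1)) (x := 1 / 2) (y := 1)
    (u := fun k : ℕ => 1 / 2 + 1 / (k : ℝ)) (v := fun _ : ℕ => 1)
    ((hf.mul continuousOn_const).mul continuousOn_const) (by norm_num) (by norm_num)
    (by simpa using tendsto_const_nhds.add hinv) tendsto_const_nhds
    (hinv_le.mono fun k hk => ⟨by linarith, by linarith⟩) (.of_forall fun _ => by norm_num)
  have hsplit := (eventually_ge_atTop 2).mono fun k hk =>
    (integral_zigzag_eq (g₀ := g₀) hf hh hk).symm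
  convert ((((hflat₁.add (tendsto_integral_zigzag_rise hf hh hH hg₀p)).add
    (tendsto_integral_zigzag_fall hf hh hH hg₀m)).add hflat₂).congr' hsplit) using 2
  ring

theorem anisotropic_limit_zigzag
    (f h H g₀ : ℝ → ℝ) (g₀pinf g₀minf M : ℝ)
    (hf : ContinuousOn f (Set.Icc 0 1))
    (hh : Continuous h) (hhbd : ∀ y, |h y| ≤ M)
    (hH : ∀ x, HasDerivAt H (h x) x)
    (hg₀ : Continuous g₀)
    (hg₀p : Tendsto g₀ atTop (nhds g₀pinf))
    (hg₀m : Tendsto g₀ atBot (nhds g₀minf)) :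
    Tendsto (fun k : ℕ =>
        ∫ t in (0:ℝ)..1, f t * ((1 + |uZig k t|) * g₀ (uZig k t)) * h (yZig k t))
      atTop
      (nhds ((∫ t in (0:ℝ)..(1/2), f t * ((1 + |(0:ℝ)|) * g₀ 0) * h 0) +
             (∫ t in (1/2:ℝ)..1, f t * ((1 + |(0:ℝ)|) * g₀ 0) * h (-1)) +
             f (1 / 2) * g₀pinf * (H 1 - H 0) +
             f (1 / 2) * g₀minf * (H 1 - H (-1)))) :=
  anisotropic_limit_zigzag_general f h H g₀ g₀pinf g₀minf hf hh hH hg₀p hg₀m
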